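/- arXiv:2507.13740 — 4 statements merged into one kernel-verified Lean document; each statement's English description precedes it below -/
import Mathlib

section
/- Let p be a monic polynomial of degree d ≥ 2 with integer coefficients. There exists a constant C > 0, depending only on d, such that for every square-summable complex sequence (c_k)_{k ∈ ℤ}, one has ∑_{k,l ∈ ℤ} |c_k||c_l| / (1 + |p(k) − p(l)|) ≤ C ∑_{k ∈ ℤ} |c_k|². -/
/-!
Schur test: since `|c k| |c l| ≤ (|c k|² + |c l|²) / 2` and the kernel
`K k l = 1 / (1 + |P k - P l|)` is symmetric, it suffices to bound `∑ l, 1 / (1 + |P l - a|)`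
uniformly in `a : ℤ`. As `d ≥ 2`, `P x - lc(P) x² / 2` is monotone on a half-line `[M, ∞)`, whence
`(l - l')² ≤ 2 |P l - P l'|` for integers `l, l' ≥ M` (and likewise for `l, l' ≤ -M`). Comparing
with a point `m` of such a tail where `P` is closest to `a`, the triangle inequality gives
`1 + (l - m)² ≤ 4 (1 + |P l - a|)`, so each tail contributes at most `∑ j : ℤ, 4 / (1 + j²)`.
-/

open Filter Polynomial Set
open scoped ENNReal

namespace ENNReal

theorem two_mul_le_add_sq (a b : ℝ≥0∞) : 2 * a * b ≤ a ^ 2 + b ^ 2 := by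
  rcases eq_or_ne a ⊤ with rfl | ha
  · simp
  rcases eq_or_ne b ⊤ with rfl | hb
  · simp
  lift a to NNReal using ha
  lift b to NNReal using hb
  exact_mod_cast _root_.two_mul_le_add_sq a b

variable {ι : Type*}

theorem tsum_prod_sq_mul_le (a : ι → ℝ≥0∞) (K : ι → ι → ℝ≥0∞) {S : ℝ≥0∞}
    (hrow : ∀ k, ∑' l, K k l ≤ S) :
    ∑' q : ι × ι, a q.1 ^ 2 * K q.1 q.2 ≤ S * ∑' k, a k ^ 2 := by
  calc ∑' q : ι × ι, a q.1 ^ 2 * K q.1 q.2 = ∑' k, a k ^ 2 * ∑' l, K k l := by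
        rw [ENNReal.tsum_prod']
        simp_rw [ENNReal.tsum_mul_left]
    _ ≤ ∑' k, a k ^ 2 * S := by gcongr with k; exact hrow k
    _ = S * ∑' k, a k ^ 2 := by rw [ENNReal.tsum_mul_right, mul_comm]

theorem tsum_prod_mul_mul_le (a : ι → ℝ≥0∞) (K : ι → ι → ℝ≥0∞) {S : ℝ≥0∞}
    (hrow : ∀ k, ∑' l, K k l ≤ S) (hcol : ∀ l, ∑' k, K k l ≤ S) :
    ∑' q : ι × ι, a q.1 * a q.2 * K q.1 q.2 ≤ S * ∑' k, a k ^ 2 := by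
  have hcol' : ∑' q : ι × ι, a q.2 ^ 2 * K q.1 q.2 ≤ S * ∑' k, a k ^ 2 := by
    rw [← (Equiv.prodComm ι ι).tsum_eq]
    exact tsum_prod_sq_mul_le a (fun l k => K k l) hcol
  refine (ENNReal.mul_le_mul_iff_right two_ne_zero ofNat_ne_top).mp ?_
  calc 2 * ∑' q : ι × ι, a q.1 * a q.2 * K q.1 q.2
      = ∑' q : ι × ι, 2 * a q.1 * a q.2 * K q.1 q.2 := by
        rw [← ENNReal.tsum_mul_left]; simp only [mul_assoc]
    _ ≤ ∑' q : ι × ι, (a q.1 ^ 2 * K q.1 q.2 + a q.2 ^ 2 * K q.1 q.2) := by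
        gcongr with q
        rw [← add_mul]
        gcongr
        exact two_mul_le_add_sq _ _
    _ = _ := ENNReal.tsum_add
    _ ≤ 2 * (S * ∑' k, a k ^ 2) := by
        rw [two_mul]
        exact add_le_add (tsum_prod_sq_mul_le a K hrow) hcol'

end ENNReal

theorem tsum_le_of_tsum_ofReal_le {α : Type*} {f : α → ℝ} (hf : ∀ x, 0 ≤ f x) {B : ℝ}
    (hB : 0 ≤ B) (h : ∑' x, ENNReal.ofReal (f x) ≤ ENNReal.ofReal B) : ∑' x, f x ≤ B := by
  calc ∑' x, f x = ∑' x, (ENNReal.ofReal (f x)).toReal := by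
        simp only [ENNReal.toReal_ofReal (hf _)]
    _ = (∑' x, ENNReal.ofReal (f x)).toReal :=
        (ENNReal.tsum_toReal_eq fun _ => ENNReal.ofReal_ne_top).symm
    _ ≤ (ENNReal.ofReal B).toReal := ENNReal.toReal_mono ENNReal.ofReal_ne_top h
    _ = B := ENNReal.toReal_ofReal hB

noncomputable def invOneAddAbs (x : ℤ) : ℝ≥0∞ := ENNReal.ofReal (1 + |(x : ℝ)|)⁻¹

theorem invOneAddAbs_sub_comm (x y : ℤ) : invOneAddAbs (x - y) = invOneAddAbs (y - x) := by
  simp only [invOneAddAbs, Int.cast_sub, abs_sub_comm]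

theorem invOneAddAbs_le_one (x : ℤ) : invOneAddAbs x ≤ 1 :=
  ENNReal.ofReal_le_one.mpr (inv_le_one_of_one_le₀ (le_add_of_nonneg_right (abs_nonneg _)))

theorem tsum_ofReal_div_one_add_sq_ne_top {c : ℝ} (hc : 0 ≤ c) :
    ∑' j : ℤ, ENNReal.ofReal (c / (1 + (j : ℝ) ^ 2)) ≠ ⊤ := by
  have hs : Summable fun j : ℤ => c / (1 + (j : ℝ) ^ 2) := by
    refine ((Real.summable_one_div_int_pow.mpr one_lt_two).mul_left c).of_norm_bounded_eventually ?_
    filter_upwards [eventually_cofinite_ne 0] with j hj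
    rw [Real.norm_of_nonneg (by positivity), mul_one_div]
    exact div_le_div_of_nonneg_left hc (by positivity) (by linarith)
  rw [← ENNReal.ofReal_tsum_of_nonneg (fun j => by positivity) hs]
  exact ENNReal.ofReal_ne_top

theorem tsum_invOneAddAbs_sub_le {v : ℕ → ℤ}
    (hv : ∀ i j : ℕ, ((i : ℤ) - j) ^ 2 ≤ 2 * |v i - v j|) (a : ℤ) :
    ∑' i, invOneAddAbs (v i - a) ≤ ∑' j : ℤ, ENNReal.ofReal (4 / (1 + (j : ℝ) ^ 2)) := by
  set m := Function.argmin fun i => (v i - a).natAbs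
  have hm : ∀ i, |v m - a| ≤ |v i - a| := fun i => by
    simpa only [Int.abs_eq_natAbs, Nat.cast_le] using
      Function.argmin_le (fun i => (v i - a).natAbs) i
  have hpt : ∀ i : ℕ, 1 + ((i : ℤ) - m) ^ 2 ≤ 4 * (1 + |v i - a|) := fun i => by
    linarith [hv i m, abs_sub_le (v i) a (v m), abs_sub_comm a (v m), hm i]
  calc ∑' i, invOneAddAbs (v i - a)
      ≤ ∑' i : ℕ, ENNReal.ofReal (4 / (1 + (((i : ℤ) - m : ℤ) : ℝ) ^ 2)) := by
        refine ENNReal.tsum_le_tsum fun i => ENNReal.ofReal_le_ofReal ?_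
        rw [inv_eq_one_div, div_le_div_iff₀ (by positivity) (by positivity), one_mul]
        exact_mod_cast hpt i
    _ ≤ _ := ENNReal.tsum_comp_le_tsum_of_injective (f := fun i : ℕ => (i : ℤ) - m)
        (fun i j h => by simpa using h) fun j : ℤ => ENNReal.ofReal (4 / (1 + (j : ℝ) ^ 2))

namespace Polynomial

theorem eventually_leadingCoeff_mul_le_eval_derivative {p : ℝ[X]} (hp : 2 ≤ p.natDegree)
    (hlc : 0 < p.leadingCoeff) :
    ∀ᶠ x in atTop, p.leadingCoeff * x ≤ p.derivative.eval x := by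
  set d := p.natDegree
  set q := derivative p - C p.leadingCoeff * X
  have hcoeff : p.leadingCoeff * (d - 1) ≤ q.coeff (d - 1) := by
    have hX : (X : ℝ[X]).coeff (d - 1) ≤ 1 := by rw [coeff_X]; split_ifs <;> norm_num
    have hd : ((d - 1 : ℕ) : ℝ) + 1 = d := by rw [Nat.cast_sub (by omega)]; ring
    rw [coeff_sub, coeff_C_mul, coeff_derivative, Nat.sub_add_cancel (by omega), hd,
      coeff_natDegree]
    nlinarith
  have hpos : 0 < q.coeff (d - 1) :=
    lt_of_lt_of_le (mul_pos hlc (by rw [sub_pos]; exact_mod_cast hp)) hcoeff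
  have hdeg : q.natDegree = d - 1 := by
    refine le_antisymm ((natDegree_sub_le _ _).trans (max_le (natDegree_derivative_le p) ?_))
      (le_natDegree_of_ne_zero hpos.ne')
    exact (natDegree_C_mul_le _ _).trans (natDegree_X_le.trans (by omega))
  have hq : Tendsto q.eval atTop atTop := by
    refine q.tendsto_atTop_of_leadingCoeff_nonneg ?_ (by rw [leadingCoeff, hdeg]; exact hpos.le)
    rw [← natDegree_pos_iff_degree_pos, hdeg]
    omega
  filter_upwards [hq.eventually_ge_atTop 0] with x hx
  simpa [q, sub_nonneg] using hx

theorem exists_leadingCoeff_mul_sq_le_eval_sub {p : ℝ[X]} (hp : 2 ≤ p.natDegree)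
    (hlc : 0 < p.leadingCoeff) :
    ∃ M, ∀ x y, M ≤ y → y ≤ x → p.leadingCoeff * (x - y) ^ 2 ≤ 2 * (p.eval x - p.eval y) := by
  obtain ⟨M, hM⟩ := eventually_atTop.mp (eventually_leadingCoeff_mul_le_eval_derivative hp hlc)
  set c := p.leadingCoeff
  have hmono : MonotoneOn (fun x => p.eval x - c / 2 * x ^ 2) (Ici (max M 0)) := by
    refine monotoneOn_of_hasDerivWithinAt_nonneg (f' := fun x => p.derivative.eval x - c * x)
      (convex_Ici _)
      (p.continuous.continuousOn.sub (by fun_prop)) (fun x _ => ?_) (fun x hx => ?_)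
    · refine HasDerivAt.hasDerivWithinAt ?_
      convert (p.hasDerivAt x).fun_sub ((hasDerivAt_pow 2 x).const_mul (c / 2)) using 1
      ring
    · rw [interior_Ici, mem_Ioi, max_lt_iff] at hx
      have := hM x hx.1.le
      linarith
  refine ⟨max M 0, fun x y hy hyx => ?_⟩
  have := hmono hy (hy.trans hyx) hyx
  have hy0 : 0 ≤ y := (le_max_right _ _).trans hy
  simp only at this
  nlinarith [mul_nonneg hlc.le (mul_nonneg hy0 (sub_nonneg.mpr hyx))]

theorem exists_abs_leadingCoeff_mul_sq_le_abs_eval_sub {p : ℝ[X]} (hp : 2 ≤ p.natDegree) :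
    ∃ M, ∀ x y, M ≤ x → M ≤ y →
      |p.leadingCoeff| * (x - y) ^ 2 ≤ 2 * |p.eval x - p.eval y| := by
  have key : ∀ q : ℝ[X], 2 ≤ q.natDegree → 0 < q.leadingCoeff → ∃ M, ∀ x y, M ≤ x → M ≤ y →
      q.leadingCoeff * (x - y) ^ 2 ≤ 2 * |q.eval x - q.eval y| := by
    intro q hq hlc
    obtain ⟨M, hM⟩ := exists_leadingCoeff_mul_sq_le_eval_sub hq hlc
    refine ⟨M, fun x y hx hy => ?_⟩
    rcases le_total y x with hyx | hxy
    · exact (hM x y hy hyx).trans (by gcongr; exact le_abs_self _)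
    · rw [abs_sub_comm, ← neg_sub, neg_sq]
      exact (hM y x hx hxy).trans (by gcongr; exact le_abs_self _)
  rcases (leadingCoeff_ne_zero.mpr (ne_zero_of_natDegree_gt hp)).lt_or_gt with hneg | hpos
  · obtain ⟨M, hM⟩ := key (-p) (by rwa [natDegree_neg]) (by rwa [leadingCoeff_neg, neg_pos])
    refine ⟨M, fun x y hx hy => ?_⟩
    have h := hM x y hx hy
    rwa [leadingCoeff_neg, eval_neg, eval_neg, neg_sub_neg, abs_sub_comm, ← abs_of_neg hneg] at h
  · obtain ⟨M, hM⟩ := key p hp hpos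
    exact ⟨M, fun x y hx hy => by simpa [abs_of_pos hpos] using hM x y hx hy⟩

theorem exists_sq_sub_le_abs_eval_sub_of_int {P : ℤ[X]} (hP : 2 ≤ P.natDegree) :
    ∃ M : ℕ, ∀ i j : ℕ,
      ((i : ℤ) - j) ^ 2 ≤ 2 * |P.eval ((i + M : ℕ) : ℤ) - P.eval ((j + M : ℕ) : ℤ)| := by
  set p := P.map (Int.castRingHom ℝ)
  obtain ⟨M, hM⟩ := exists_abs_leadingCoeff_mul_sq_le_abs_eval_sub (p := p)
    ((natDegree_map_eq_of_injective (Int.castRingHom ℝ).injective_int _).symm ▸ hP)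
  have hlc : (1 : ℝ) ≤ |p.leadingCoeff| := by
    rw [leadingCoeff_map_of_injective (Int.castRingHom ℝ).injective_int, eq_intCast, ← Int.cast_abs]
    exact_mod_cast Int.one_le_abs (leadingCoeff_ne_zero.mpr (ne_zero_of_natDegree_gt hP))
  have hMle : ∀ i : ℕ, M ≤ ((i + ⌈M⌉₊ : ℕ) : ℝ) := fun i => by
    push_cast
    linarith [Nat.le_ceil M, (Nat.cast_nonneg i : (0 : ℝ) ≤ i)]
  refine ⟨⌈M⌉₊, fun i j => ?_⟩
  suffices ((i : ℝ) - j) ^ 2 ≤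
      2 * |((P.eval ((i + ⌈M⌉₊ : ℕ) : ℤ) - P.eval ((j + ⌈M⌉₊ : ℕ) : ℤ) : ℤ) : ℝ)| by
    exact_mod_cast this
  calc ((i : ℝ) - j) ^ 2 = ((i + ⌈M⌉₊ : ℕ) - (j + ⌈M⌉₊ : ℕ) : ℝ) ^ 2 := by push_cast; ring
    _ ≤ |p.leadingCoeff| * ((i + ⌈M⌉₊ : ℕ) - (j + ⌈M⌉₊ : ℕ) : ℝ) ^ 2 :=
      le_mul_of_one_le_left (sq_nonneg _) hlc
    _ ≤ 2 * |p.eval ((i + ⌈M⌉₊ : ℕ) : ℝ) - p.eval ((j + ⌈M⌉₊ : ℕ) : ℝ)| := hM _ _ (hMle i) (hMle j)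
    _ = _ := by simp only [p, eval_natCast_map, eq_intCast, Int.cast_sub]

theorem exists_tsum_nat_invOneAddAbs_eval_sub_le {P : ℤ[X]} (hP : 2 ≤ P.natDegree) :
    ∃ B : ℝ≥0∞, B ≠ ⊤ ∧ ∀ a : ℤ, ∑' n : ℕ, invOneAddAbs (P.eval (n : ℤ) - a) ≤ B := by
  obtain ⟨M, hM⟩ := exists_sq_sub_le_abs_eval_sub_of_int hP
  refine ⟨M + ∑' j : ℤ, ENNReal.ofReal (4 / (1 + (j : ℝ) ^ 2)),
    ENNReal.add_ne_top.mpr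
      ⟨ENNReal.natCast_ne_top M, tsum_ofReal_div_one_add_sq_ne_top zero_le_four⟩,
    fun a => ?_⟩
  rw [← ENNReal.summable.sum_add_tsum_nat_add' (k := M)]
  gcongr
  · calc ∑ i ∈ Finset.range M, invOneAddAbs (P.eval (i : ℤ) - a)
        ≤ ∑ i ∈ Finset.range M, 1 := Finset.sum_le_sum fun i _ => invOneAddAbs_le_one _
      _ = M := by simp
  · exact tsum_invOneAddAbs_sub_le hM a

theorem exists_tsum_invOneAddAbs_eval_sub_le {P : ℤ[X]} (hP : 2 ≤ P.natDegree) :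
    ∃ S : ℝ≥0∞, S ≠ ⊤ ∧ ∀ a : ℤ, ∑' l : ℤ, invOneAddAbs (P.eval l - a) ≤ S := by
  obtain ⟨B₁, hB₁, h₁⟩ := exists_tsum_nat_invOneAddAbs_eval_sub_le hP
  obtain ⟨B₂, hB₂, h₂⟩ := exists_tsum_nat_invOneAddAbs_eval_sub_le (P := P.comp (-(X + 1)))
    (by rwa [natDegree_comp, natDegree_neg, ← C_1, natDegree_X_add_C, mul_one])
  refine ⟨B₁ + B₂, ENNReal.add_ne_top.mpr ⟨hB₁, hB₂⟩, fun a => ?_⟩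
  rw [← tsum_nat_add_neg_add_one ENNReal.summable, ENNReal.tsum_add]
  gcongr
  · exact h₁ a
  · simpa [eval_comp] using h₂ a

end Polynomial

theorem stmt2_general (d : ℕ) (hd : 2 ≤ d) (P : Polynomial ℤ)
    (hdeg : P.natDegree = d) :
    ∃ C : ℝ, 0 < C ∧ ∀ c : ℤ → ℂ, Summable (fun k => ‖c k‖ ^ 2) →
      ∑' q : ℤ × ℤ, ‖c q.1‖ * ‖c q.2‖ / (1 + |((P.eval q.1 - P.eval q.2 : ℤ) : ℝ)|) ≤
        C * ∑' k : ℤ, ‖c k‖ ^ 2 := by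
  obtain ⟨S, hS, hrow⟩ := Polynomial.exists_tsum_invOneAddAbs_eval_sub_le (hdeg ▸ hd)
  refine ⟨S.toReal + 1, by positivity, fun c hc => ?_⟩
  have hschur := ENNReal.tsum_prod_mul_mul_le (fun k => ENNReal.ofReal ‖c k‖)
    (fun k l => invOneAddAbs (P.eval k - P.eval l))
    (fun k => (tsum_congr fun l => invOneAddAbs_sub_comm _ _).trans_le (hrow (P.eval k)))
    (fun l => hrow (P.eval l))
  have hsq : ∑' k, ENNReal.ofReal ‖c k‖ ^ 2 = ENNReal.ofReal (∑' k, ‖c k‖ ^ 2) := by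
    rw [ENNReal.ofReal_tsum_of_nonneg (fun _ => by positivity) hc]
    simp only [ENNReal.ofReal_pow (norm_nonneg _)]
  calc _ ≤ S.toReal * ∑' k, ‖c k‖ ^ 2 := by
        refine tsum_le_of_tsum_ofReal_le (fun q => by positivity) (by positivity) ?_
        rw [ENNReal.ofReal_mul ENNReal.toReal_nonneg, ENNReal.ofReal_toReal hS, ← hsq]
        refine le_of_eq_of_le (tsum_congr fun q => ?_) hschur
        rw [div_eq_mul_inv, ENNReal.ofReal_mul (by positivity), ENNReal.ofReal_mul (by positivity)]
        rfl
    _ ≤ (S.toReal + 1) * ∑' k, ‖c k‖ ^ 2 :=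
        mul_le_mul_of_nonneg_right (by linarith) (tsum_nonneg fun _ => by positivity)

/-- Schur-type bound: for a monic integer polynomial `P` of degree `d ≥ 2`, there is
`C > 0` (depending only on `d`) with
`∑_{k,l} ‖c k‖ ‖c l‖ / (1 + |P(k) - P(l)|) ≤ C ∑_k ‖c k‖²` for all `(c_k) ∈ ℓ²(ℤ)`. -/
theorem stmt2 (d : ℕ) (hd : 2 ≤ d) (P : Polynomial ℤ) (hP : P.Monic)
    (hdeg : P.natDegree = d) :
    ∃ C : ℝ, 0 < C ∧ ∀ c : ℤ → ℂ, Summable (fun k => ‖c k‖ ^ 2) →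
      ∑' q : ℤ × ℤ, ‖c q.1‖ * ‖c q.2‖ / (1 + |((P.eval q.1 - P.eval q.2 : ℤ) : ℝ)|) ≤
        C * ∑' k : ℤ, ‖c k‖ ^ 2 :=
  stmt2_general d hd P hdeg
end

section
/- Let p be a monic integer polynomial of degree d ≥ 2 and T > 0. There is a constant C > 0, depending only on d and T, such that for every u₀ ∈ L²(𝕋), the solution u(t,x) = ∑_k û₀(k) e^{i(kx + p(k)t)} of ∂_t u = iP(D)u satisfies sup_{x ∈ 𝕋} (∫₀^T |u(t,x)|² dt)^{1/2} ≤ C ‖u₀‖_{L²(𝕋)}. -/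
/-!
Expanding the square, `∫₀ᵀ |u(t, x)|² dt` is the sum over `k, m` of
`c_k c̄_m e^{i(k - m)x} ∫₀ᵀ e^{i(P(k) - P(m))t} dt`, and the time integral has modulus at most
`(T + 2) / (1 + |P(k) - P(m)|)`. By Schur's test it then suffices to bound the row sums
`∑_m (1 + |A - P(m)|)⁻¹` uniformly in `A ∈ ℤ`. Since `deg P ≥ 2`, the mean value theorem gives
gaps `P(n + 1) - P(n) ≥ n` for large `n`, hence the quadratic separation
`(a - b)² ≤ 2 |P(a) - P(b)|` on each tail `a, b ≥ M` (and likewise for `P(-X)`). Counted from the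
index where `P` comes closest to `A`, the terms of a tail therefore decay like `(1 + j²)⁻¹`.
-/

open Filter MeasureTheory Polynomial Real

lemma Polynomial.eventually_le_eval {q : ℝ[X]} (hdeg : 1 ≤ q.natDegree)
    (hlead : 1 < q.leadingCoeff) : ∀ᶠ x in atTop, x ≤ q.eval x := by
  have hratio : Tendsto (fun x => q.eval x / (X ^ q.natDegree : ℝ[X]).eval x) atTop
      (nhds q.leadingCoeff) := by
    simpa using div_tendsto_atTop_leadingCoeff_div_of_degree_eq q (X ^ q.natDegree)
      (by rw [degree_X_pow, degree_eq_natDegree (ne_zero_of_natDegree_gt hdeg)])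
  filter_upwards [hratio.eventually (lt_mem_nhds hlead), eventually_ge_atTop 1] with x hx hx1
  rw [eval_pow, eval_X, one_lt_div (by positivity)] at hx
  calc x = x ^ 1 := (pow_one x).symm
    _ ≤ x ^ q.natDegree := pow_le_pow_right₀ hx1 hdeg
    _ ≤ q.eval x := hx.le

lemma Polynomial.eventually_le_eval_add_one_sub_eval {p : ℝ[X]}
    (hp : ∀ᶠ x in atTop, x ≤ p.derivative.eval x) :
    ∀ᶠ x in atTop, x ≤ p.eval (x + 1) - p.eval x := by
  obtain ⟨x₀, hx₀⟩ := eventually_atTop.1 hp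
  filter_upwards [eventually_ge_atTop x₀] with x hx
  obtain ⟨ξ, hξ, hslope⟩ := exists_deriv_eq_slope (fun y => p.eval y) (lt_add_one x)
    p.continuous.continuousOn (fun y _ => p.differentiableAt.differentiableWithinAt)
  rw [Polynomial.deriv, add_sub_cancel_left, div_one] at hslope
  linarith [hx₀ ξ (hx.trans hξ.1.le), hξ.1]

lemma Polynomial.eventually_le_eval_add_one_sub_eval_int {P : ℤ[X]} (hdeg : 2 ≤ P.natDegree)
    (hlead : 0 < P.leadingCoeff) :
    ∀ᶠ n : ℤ in atTop, n ≤ P.eval (n + 1) - P.eval n := by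
  set p := P.map (Int.castRingHom ℝ)
  have hpdeg : p.natDegree = P.natDegree := natDegree_map_eq_of_injective Int.cast_injective _
  have hplead : p.leadingCoeff = P.leadingCoeff :=
    leadingCoeff_map_of_injective Int.cast_injective _
  have hderiv : ∀ᶠ x in atTop, x ≤ p.derivative.eval x := by
    refine eventually_le_eval (by rw [natDegree_derivative]; omega) ?_
    rw [leadingCoeff_derivative, hplead, hpdeg]
    have h1 : (1 : ℝ) ≤ P.leadingCoeff := by exact_mod_cast hlead
    have h2 : (2 : ℝ) ≤ P.natDegree := by exact_mod_cast hdeg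
    nlinarith
  filter_upwards [tendsto_intCast_atTop_atTop.eventually
    (eventually_le_eval_add_one_sub_eval hderiv)] with n hn
  have hcast : ∀ m : ℤ, p.eval (m : ℝ) = P.eval m := fun m => eval_intCast_map _ P m
  rw [← Int.cast_one, ← Int.cast_add, hcast, hcast] at hn
  exact_mod_cast hn

lemma sq_sub_le_two_mul_sub_of_gap {v : ℤ → ℤ} {a b : ℤ} (hb : 1 ≤ b) (hba : b ≤ a)
    (hgap : ∀ n, b ≤ n → n ≤ v (n + 1) - v n) : (a - b) ^ 2 ≤ 2 * (v a - v b) := by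
  induction a, hba using Int.leInduction with
  | base => simp
  | succ a hba ih =>
    have := hgap a hba
    nlinarith

lemma Polynomial.exists_sq_sub_le_two_mul_abs_eval_sub {P : ℤ[X]} (hdeg : 2 ≤ P.natDegree) :
    ∃ M : ℕ, ∀ a b : ℤ, M ≤ a → M ≤ b → (a - b) ^ 2 ≤ 2 * |P.eval a - P.eval b| := by
  wlog hlead : 0 < P.leadingCoeff generalizing P
  · have hP : P ≠ 0 := ne_zero_of_natDegree_gt hdeg
    obtain ⟨M, hM⟩ := this (P := -P) (by rwa [natDegree_neg])
      (by rw [leadingCoeff_neg]; have := leadingCoeff_ne_zero.2 hP; omega)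
    refine ⟨M, fun a b ha hb => ?_⟩
    have := hM a b ha hb
    rwa [eval_neg, eval_neg, neg_sub_neg, abs_sub_comm] at this
  obtain ⟨N, hN⟩ := (eventually_le_eval_add_one_sub_eval_int hdeg hlead).exists_forall_of_atTop
  refine ⟨(max N 1).toNat, fun a b ha hb => ?_⟩
  wlog hba : b ≤ a generalizing a b
  · rw [← neg_sub, neg_sq, abs_sub_comm]
    exact this b a hb ha (by omega)
  calc (a - b) ^ 2 ≤ 2 * (P.eval a - P.eval b) :=
        sq_sub_le_two_mul_sub_of_gap (v := fun n => P.eval n) (by omega) hba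
          (fun n hn => hN n (by omega))
    _ ≤ 2 * |P.eval a - P.eval b| := by gcongr; exact le_abs_self _

lemma summable_inv_one_add_sq_int : Summable (fun n : ℤ => (1 + (n : ℝ) ^ 2)⁻¹) := by
  refine (Real.summable_one_div_int_pow.2 one_lt_two).of_norm_bounded_eventually ?_
  filter_upwards [(Set.finite_singleton (0 : ℤ)).compl_mem_cofinite] with n hn
  have hn : (n : ℝ) ≠ 0 := by simpa using hn
  rw [Real.norm_of_nonneg (by positivity), one_div]
  exact inv_anti₀ (by positivity) (by linarith)

lemma summable_and_tsum_inv_one_add_abs_sub_le {v : ℕ → ℤ}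
    (hsep : ∀ s t : ℕ, ((s : ℤ) - t) ^ 2 ≤ 2 * |v s - v t|) (A : ℤ) :
    Summable (fun s => (1 + |(A : ℝ) - v s|)⁻¹) ∧
      ∑' s, (1 + |(A : ℝ) - v s|)⁻¹ ≤ 4 * ∑' n : ℤ, (1 + (n : ℝ) ^ 2)⁻¹ := by
  set s₀ := Function.argmin (fun s => (A - v s).natAbs)
  set g : ℤ → ℝ := fun n => (1 + (n : ℝ) ^ 2)⁻¹
  -- comparing with the index `s₀` closest to `A` turns the separation of the `v s` into decay
  have hbound : ∀ s : ℕ, (1 + |(A : ℝ) - v s|)⁻¹ ≤ 4 * g ((s : ℤ) - s₀) := by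
    intro s
    have hmin : |A - v s₀| ≤ |A - v s| := by
      simp only [Int.abs_eq_natAbs, Nat.cast_le]
      exact Function.argmin_le (fun s => (A - v s).natAbs) s
    have hint : 1 + ((s : ℤ) - s₀) ^ 2 ≤ 4 * (1 + |A - v s|) := by
      have := hsep s s₀
      have htri := abs_sub_le (v s) A (v s₀)
      rw [abs_sub_comm (v s) A] at htri
      linarith
    have hreal : 1 + (((s : ℤ) - s₀ : ℤ) : ℝ) ^ 2 ≤ 4 * (1 + |(A : ℝ) - v s|) := by
      exact_mod_cast hint
    rw [← inv_inv (4 : ℝ), ← mul_inv]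
    exact inv_anti₀ (by positivity) (by linarith)
  have hinj : Function.Injective (fun s : ℕ => (s : ℤ) - s₀) := fun a b h => by simpa using h
  have hg : Summable (fun s : ℕ => 4 * g ((s : ℤ) - s₀)) :=
    (summable_inv_one_add_sq_int.comp_injective hinj).mul_left 4
  have hsum : Summable (fun s => (1 + |(A : ℝ) - v s|)⁻¹) :=
    hg.of_nonneg_of_le (fun s => by positivity) hbound
  refine ⟨hsum, ?_⟩
  calc ∑' s, (1 + |(A : ℝ) - v s|)⁻¹ ≤ ∑' s : ℕ, 4 * g ((s : ℤ) - s₀) :=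
        hsum.tsum_le_tsum hbound hg
    _ = 4 * ∑' s : ℕ, g ((s : ℤ) - s₀) := tsum_mul_left
    _ ≤ 4 * ∑' n : ℤ, g n := by
        gcongr
        exact (summable_inv_one_add_sq_int.comp_injective hinj).tsum_le_tsum_of_inj _ hinj
          (fun n _ => by positivity) (fun _ => le_rfl) summable_inv_one_add_sq_int

lemma Polynomial.exists_tsum_nat_inv_one_add_abs_sub_eval_le {P : ℤ[X]}
    (hdeg : 2 ≤ P.natDegree) :
    ∃ K, ∀ A : ℤ, Summable (fun n : ℕ => (1 + |(A : ℝ) - P.eval (n : ℤ)|)⁻¹) ∧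
      ∑' n : ℕ, (1 + |(A : ℝ) - P.eval (n : ℤ)|)⁻¹ ≤ K := by
  obtain ⟨M, hM⟩ := exists_sq_sub_le_two_mul_abs_eval_sub hdeg
  refine ⟨M + 4 * ∑' n : ℤ, (1 + (n : ℝ) ^ 2)⁻¹, fun A => ?_⟩
  set f : ℕ → ℝ := fun n => (1 + |(A : ℝ) - P.eval (n : ℤ)|)⁻¹
  have htail := summable_and_tsum_inv_one_add_abs_sub_le (v := fun n => P.eval ((n : ℤ) + M))
    (fun s t => by simpa using hM (s + M) (t + M) (by omega) (by omega)) A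
  have hshift : (fun n => f (n + M)) = fun n : ℕ => (1 + |(A : ℝ) - P.eval ((n : ℤ) + M)|)⁻¹ := by
    ext n; simp [f]
  rw [← hshift] at htail
  have hsum : Summable f := (summable_nat_add_iff M).1 htail.1
  refine ⟨hsum, ?_⟩
  have hhead : ∑ i ∈ Finset.range M, f i ≤ M := by
    calc ∑ i ∈ Finset.range M, f i ≤ ∑ i ∈ Finset.range M, (1 : ℝ) :=
          Finset.sum_le_sum fun i _ => inv_le_one_of_one_le₀ (by simp)
      _ = M := by simp
  rw [← hsum.sum_add_tsum_nat_add M]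
  linarith [htail.2]

lemma Polynomial.exists_tsum_inv_one_add_abs_sub_eval_le {P : ℤ[X]} (hdeg : 2 ≤ P.natDegree) :
    ∃ K, 0 < K ∧ ∀ A : ℤ, Summable (fun m : ℤ => (1 + |(A : ℝ) - P.eval m|)⁻¹) ∧
      ∑' m : ℤ, (1 + |(A : ℝ) - P.eval m|)⁻¹ ≤ K := by
  obtain ⟨K₁, hK₁⟩ := exists_tsum_nat_inv_one_add_abs_sub_eval_le hdeg
  obtain ⟨K₂, hK₂⟩ := exists_tsum_nat_inv_one_add_abs_sub_eval_le (P := P.comp (-X))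
    (by rwa [natDegree_comp, natDegree_neg, natDegree_X, mul_one])
  have hbound : ∀ A : ℤ, Summable (fun m : ℤ => (1 + |(A : ℝ) - P.eval m|)⁻¹) ∧
      ∑' m : ℤ, (1 + |(A : ℝ) - P.eval m|)⁻¹ ≤ K₁ + K₂ := by
    intro A
    set f : ℤ → ℝ := fun m => (1 + |(A : ℝ) - P.eval m|)⁻¹
    have hneg : (fun n : ℕ => f (-n)) =
        fun n : ℕ => (1 + |(A : ℝ) - (P.comp (-X)).eval (n : ℤ)|)⁻¹ := by
      ext n; simp [f]
    obtain ⟨hsum₁, htsum₁⟩ := hK₁ A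
    obtain ⟨hsum₂, htsum₂⟩ := hK₂ A
    rw [← hneg] at hsum₂ htsum₂
    have hf := hsum₁.hasSum.of_nat_of_neg hsum₂.hasSum
    refine ⟨hf.summable, ?_⟩
    have : 0 ≤ f 0 := by positivity
    linarith [hf.tsum_eq]
  refine ⟨K₁ + K₂, ?_, hbound⟩
  obtain ⟨hsum, htsum⟩ := hbound 0
  have hterm := hsum.le_tsum 0 (fun _ _ => by positivity)
  have hpos : 0 < (1 + |((0 : ℤ) : ℝ) - P.eval 0|)⁻¹ := by positivity
  linarith

lemma tsum_mul_mul_le_of_tsum_row_le {ι : Type*} {a : ι → ℝ} {W : ι → ι → ℝ} {K : ℝ}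
    (hW : ∀ k m, 0 ≤ W k m) (hW_symm : ∀ k m, W k m = W m k) (hrow : ∀ k, Summable (W k))
    (hrow_le : ∀ k, ∑' m, W k m ≤ K) (ha : Summable (fun k => a k ^ 2)) :
    ∑' p : ι × ι, a p.1 * a p.2 * W p.1 p.2 ≤ K * ∑' k, a k ^ 2 := by
  set u : ι × ι → ℝ := fun p => a p.1 ^ 2 * W p.1 p.2
  have hu_nonneg : 0 ≤ u := fun p => mul_nonneg (sq_nonneg _) (hW _ _)
  have hu_row : ∀ k, Summable (fun m => u (k, m)) := fun k => (hrow k).mul_left (a k ^ 2)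
  have hu_row_le : ∀ k, ∑' m, u (k, m) ≤ K * a k ^ 2 := fun k => by
    change ∑' m, a k ^ 2 * W k m ≤ _
    rw [tsum_mul_left, mul_comm K]
    exact mul_le_mul_of_nonneg_left (hrow_le k) (sq_nonneg _)
  have hu : Summable u := (summable_prod_of_nonneg hu_nonneg).2 ⟨hu_row,
    (ha.mul_left K).of_nonneg_of_le (fun k => tsum_nonneg fun m => hu_nonneg _) hu_row_le⟩
  have hu_le : ∑' p, u p ≤ K * ∑' k, a k ^ 2 := by
    rw [hu.tsum_prod' hu_row, ← tsum_mul_left]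
    exact (hu.prod).tsum_le_tsum hu_row_le (ha.mul_left K)
  have hu_swap : Summable (u ∘ Prod.swap) := (Equiv.prodComm ι ι).summable_iff.2 hu
  -- `a k a m ≤ (a k² + a m²) / 2`, and the symmetry of `W` makes both halves the same sum
  have hpt : ∀ p : ι × ι, ‖a p.1 * a p.2 * W p.1 p.2‖ ≤ (u p + (u ∘ Prod.swap) p) / 2 := by
    rintro ⟨k, m⟩
    have := two_mul_le_add_sq |a k| |a m|
    rw [sq_abs, sq_abs] at this
    simp only [u, Function.comp, Prod.swap, norm_mul, Real.norm_eq_abs, abs_of_nonneg (hW k m),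
      hW_symm m k]
    nlinarith [hW k m]
  have hmaj : Summable (fun p => (u p + (u ∘ Prod.swap) p) / 2) := (hu.add hu_swap).div_const 2
  calc ∑' p : ι × ι, a p.1 * a p.2 * W p.1 p.2
      ≤ ∑' p, (u p + (u ∘ Prod.swap) p) / 2 :=
        (hmaj.of_norm_bounded hpt).tsum_le_tsum (fun p => (le_abs_self _).trans (hpt p)) hmaj
    _ = ∑' p, u p := by
        have hswap_eq : ∑' p, (u ∘ Prod.swap) p = ∑' p, u p := (Equiv.prodComm ι ι).tsum_eq u
        rw [tsum_div_const, hu.tsum_add hu_swap, hswap_eq]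
        ring
    _ ≤ K * ∑' k, a k ^ 2 := hu_le

lemma Complex.norm_exp_I_mul_ofReal_mul_ofReal (a b : ℝ) :
    ‖Complex.exp (Complex.I * (a * b))‖ = 1 := by
  exact_mod_cast Complex.norm_exp_I_mul_ofReal (a * b)

lemma norm_setIntegral_exp_I_mul_le {T : ℝ} (hT : 0 ≤ T) (ξ : ℝ) :
    ‖∫ t in Set.Ioc 0 T, Complex.exp (Complex.I * (ξ * t))‖ ≤ (T + 2) / (1 + |ξ|) := by
  set J := ∫ t in Set.Ioc 0 T, Complex.exp (Complex.I * (ξ * t))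
  have hle_T : ‖J‖ ≤ T := by
    have := norm_setIntegral_le_of_norm_le_const (C := 1) (μ := volume) (s := Set.Ioc 0 T)
      (f := fun t : ℝ => Complex.exp (Complex.I * (ξ * t))) measure_Ioc_lt_top
      (fun t _ => (Complex.norm_exp_I_mul_ofReal_mul_ofReal ξ t).le)
    simpa [hT] using this
  have hle_two : |ξ| * ‖J‖ ≤ 2 := by
    rcases eq_or_ne ξ 0 with rfl | hξ
    · simp
    have hIξ : Complex.I * ξ ≠ 0 := by simp [hξ]
    have hJ : J = (Complex.exp (Complex.I * ξ * T) - Complex.exp (Complex.I * ξ * 0)) /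
        (Complex.I * ξ) := by
      simp_rw [J, ← mul_assoc]
      rw [← intervalIntegral.integral_of_le hT]
      exact integral_exp_mul_complex hIξ
    rw [hJ, norm_div, norm_mul, Complex.norm_I, one_mul, Complex.norm_real, Real.norm_eq_abs,
      mul_div_cancel₀ _ (abs_ne_zero.2 hξ)]
    calc _ ≤ ‖Complex.exp (Complex.I * ξ * T)‖ + ‖Complex.exp (Complex.I * ξ * 0)‖ :=
          norm_sub_le _ _
      _ = 2 := by
          simp_rw [mul_assoc, Complex.norm_exp_I_mul_ofReal_mul_ofReal ξ T]
          norm_num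
  rw [le_div_iff₀ (by positivity)]
  linarith

section ExponentialSum

variable {ι : Type*} (c : ι → ℂ) (ξ : ι → ℝ)

lemma norm_mul_exp_I_mul (k : ι) (t : ℝ) :
    ‖c k * Complex.exp (Complex.I * (ξ k * t))‖ = ‖c k‖ := by
  rw [norm_mul, Complex.norm_exp_I_mul_ofReal_mul_ofReal, mul_one]

lemma sq_norm_tsum_mul_exp_eq (hc : Summable (‖c ·‖)) (t : ℝ) :
    ((‖∑' k, c k * Complex.exp (Complex.I * (ξ k * t))‖ ^ 2 : ℝ) : ℂ) =
      ∑' p : ι × ι, c p.1 * (starRingEnd ℂ) (c p.2) *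
        Complex.exp (Complex.I * ((ξ p.1 - ξ p.2 : ℝ) * t)) := by
  have hc' : Summable (fun k => ‖c k * Complex.exp (Complex.I * (ξ k * t))‖) := by
    simpa only [norm_mul_exp_I_mul] using hc
  have hconj : Summable
      (fun k => ‖(starRingEnd ℂ) (c k * Complex.exp (Complex.I * (ξ k * t)))‖) := by
    simpa only [Complex.norm_conj] using hc'
  rw [Complex.ofReal_pow, ← Complex.mul_conj', Complex.conj_tsum,
    tsum_mul_tsum_of_summable_norm hc' hconj]
  congr 1
  ext p
  rw [map_mul, ← Complex.exp_conj]
  simp only [map_mul, Complex.conj_I, Complex.conj_ofReal]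
  rw [mul_mul_mul_comm, ← Complex.exp_add]
  push_cast
  ring_nf

lemma setIntegral_sq_norm_tsum_mul_exp_le [Countable ι] {T : ℝ} (hT : 0 ≤ T) :
    ∫ t in Set.Ioc 0 T, ‖∑' k, c k * Complex.exp (Complex.I * (ξ k * t))‖ ^ 2 ≤
      (T + 2) * ∑' p : ι × ι, ‖c p.1‖ * ‖c p.2‖ * (1 + |ξ p.1 - ξ p.2|)⁻¹ := by
  by_cases hc : Summable (‖c ·‖)
  swap
  · -- a series that is not absolutely summable is not summable in `ℂ`, so its `tsum` is `0`
    have hzero : ∀ t : ℝ, ∑' k, c k * Complex.exp (Complex.I * (ξ k * t)) = 0 := fun t =>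
      tsum_eq_zero_of_not_summable fun h => hc <| by
        simpa only [norm_mul_exp_I_mul] using summable_norm_iff.2 h
    simp only [hzero, norm_zero, ne_eq, OfNat.ofNat_ne_zero, not_false_eq_true, zero_pow,
      integral_zero]
    exact mul_nonneg (by linarith) (tsum_nonneg fun p => by positivity)
  set F : ι × ι → ℝ → ℂ := fun p t => c p.1 * (starRingEnd ℂ) (c p.2) *
    Complex.exp (Complex.I * ((ξ p.1 - ξ p.2 : ℝ) * t))
  have hF_norm : ∀ p t, ‖F p t‖ = ‖c p.1‖ * ‖c p.2‖ := fun p t => by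
    simp only [F, norm_mul, Complex.norm_conj, Complex.norm_exp_I_mul_ofReal_mul_ofReal, mul_one]
  have hF_int : ∀ p, Integrable (F p) (volume.restrict (Set.Ioc 0 T)) := fun p =>
    (continuous_const.mul (Complex.continuous_exp.comp (continuous_const.mul
      (continuous_const.mul Complex.continuous_ofReal)))).integrableOn_Ioc
  have hprod : Summable (fun p : ι × ι => ‖c p.1‖ * ‖c p.2‖) :=
    hc.mul_of_nonneg hc (fun _ => norm_nonneg _) (fun _ => norm_nonneg _)
  have hF_sum : Summable (fun p => ∫ t in Set.Ioc 0 T, ‖F p t‖) := by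
    simpa only [hF_norm, setIntegral_const, smul_eq_mul, mul_comm] using
      hprod.mul_left (volume.real (Set.Ioc (0 : ℝ) T))
  have hbound : ∀ p : ι × ι, ‖∫ t in Set.Ioc 0 T, F p t‖ ≤
      (T + 2) * (‖c p.1‖ * ‖c p.2‖ * (1 + |ξ p.1 - ξ p.2|)⁻¹) := fun p => by
    rw [integral_const_mul, norm_mul, norm_mul, Complex.norm_conj]
    calc _ ≤ ‖c p.1‖ * ‖c p.2‖ * ((T + 2) / (1 + |ξ p.1 - ξ p.2|)) := by
          gcongr; exact norm_setIntegral_exp_I_mul_le hT _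
      _ = _ := by ring
  have hsum : Summable (fun p : ι × ι =>
      (T + 2) * (‖c p.1‖ * ‖c p.2‖ * (1 + |ξ p.1 - ξ p.2|)⁻¹)) :=
    (hprod.of_nonneg_of_le (fun p => by positivity) fun p =>
      mul_le_of_le_one_right (by positivity) (inv_le_one_of_one_le₀ (by simp))).mul_left _
  calc ∫ t in Set.Ioc 0 T, ‖∑' k, c k * Complex.exp (Complex.I * (ξ k * t))‖ ^ 2
      = ‖((∫ t in Set.Ioc 0 T,
            ‖∑' k, c k * Complex.exp (Complex.I * (ξ k * t))‖ ^ 2 : ℝ) : ℂ)‖ := by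
        rw [Complex.norm_real, Real.norm_of_nonneg (setIntegral_nonneg measurableSet_Ioc
          fun t _ => by positivity)]
    _ = ‖∑' p, ∫ t in Set.Ioc 0 T, F p t‖ := by
        rw [← integral_complex_ofReal, integral_tsum_of_summable_integral_norm hF_int hF_sum]
        simp_rw [sq_norm_tsum_mul_exp_eq c ξ hc, F]
    _ ≤ ∑' p, ‖∫ t in Set.Ioc 0 T, F p t‖ :=
        norm_tsum_le_tsum_norm (hsum.of_nonneg_of_le (fun _ => norm_nonneg _) hbound)
    _ ≤ ∑' p : ι × ι, (T + 2) * (‖c p.1‖ * ‖c p.2‖ * (1 + |ξ p.1 - ξ p.2|)⁻¹) :=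
        (hsum.of_nonneg_of_le (fun _ => norm_nonneg _) hbound).tsum_le_tsum hbound hsum
    _ = _ := tsum_mul_left

end ExponentialSum

theorem stmt3_general (d : ℕ) (hd : 2 ≤ d) (P : Polynomial ℤ)
    (hdeg : P.natDegree = d) (T : ℝ) (hT : 0 < T) :
    ∃ C : ℝ, 0 < C ∧ ∀ c : ℤ → ℂ, Summable (fun k => ‖c k‖ ^ 2) → ∀ x : ℝ,
      Real.sqrt (∫ t in Set.Ioc (0:ℝ) T,
          ‖∑' k : ℤ, c k *
            Complex.exp (Complex.I * ((k : ℂ) * (x : ℂ) + ((P.eval k : ℤ) : ℂ) * (t : ℂ)))‖ ^ 2)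
        ≤ C * Real.sqrt (∑' k : ℤ, ‖c k‖ ^ 2) := by
  obtain ⟨K, hK, hrow⟩ := P.exists_tsum_inv_one_add_abs_sub_eval_le (hdeg ▸ hd)
  refine ⟨√((T + 2) * K), by positivity, fun c hc x => ?_⟩
  set ξ : ℤ → ℝ := fun k => ((P.eval k : ℤ) : ℝ)
  set b : ℤ → ℂ := fun k => c k * Complex.exp (Complex.I * ((k : ℝ) * x))
  have hb : ∀ k, ‖b k‖ = ‖c k‖ := fun k => norm_mul_exp_I_mul c (fun k : ℤ => (k : ℝ)) k x
  have hphase : ∀ (k : ℤ) (t : ℝ),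
      c k * Complex.exp (Complex.I * ((k : ℂ) * (x : ℂ) + ((P.eval k : ℤ) : ℂ) * (t : ℂ))) =
        b k * Complex.exp (Complex.I * (ξ k * t)) := fun k t => by
    simp only [b, ξ, mul_add, Complex.exp_add]
    push_cast
    ring
  simp_rw [hphase, ← sqrt_mul (by positivity : 0 ≤ (T + 2) * K)]
  apply sqrt_le_sqrt
  calc _ ≤ (T + 2) * ∑' p : ℤ × ℤ, ‖b p.1‖ * ‖b p.2‖ * (1 + |ξ p.1 - ξ p.2|)⁻¹ :=
        setIntegral_sq_norm_tsum_mul_exp_le b ξ hT.le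
    _ = (T + 2) * ∑' p : ℤ × ℤ, ‖c p.1‖ * ‖c p.2‖ * (1 + |ξ p.1 - ξ p.2|)⁻¹ := by
        simp only [hb]
    _ ≤ (T + 2) * (K * ∑' k, ‖c k‖ ^ 2) := by
        gcongr
        exact tsum_mul_mul_le_of_tsum_row_le (fun _ _ => by positivity)
          (fun k m => by rw [abs_sub_comm]) (fun k => (hrow (P.eval k)).1)
          (fun k => (hrow (P.eval k)).2) hc
    _ = (T + 2) * K * ∑' k, ‖c k‖ ^ 2 := by ring

/-- `L^∞_x L²_t` Strichartz estimate for `e^{itP(D)}` on the torus: for the solution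
`u(t,x) = ∑_k c_k e^{i(kx + P(k)t)}`, one has
`sup_x (∫₀^T |u(t,x)|² dt)^{1/2} ≤ C (∑_k |c_k|²)^{1/2}`. -/
theorem stmt3 (d : ℕ) (hd : 2 ≤ d) (P : Polynomial ℤ) (hP : P.Monic)
    (hdeg : P.natDegree = d) (T : ℝ) (hT : 0 < T) :
    ∃ C : ℝ, 0 < C ∧ ∀ c : ℤ → ℂ, Summable (fun k => ‖c k‖ ^ 2) → ∀ x : ℝ,
      Real.sqrt (∫ t in Set.Ioc (0:ℝ) T,
          ‖∑' k : ℤ, c k *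
            Complex.exp (Complex.I * ((k : ℂ) * (x : ℂ) + ((P.eval k : ℤ) : ℂ) * (t : ℂ)))‖ ^ 2)
        ≤ C * Real.sqrt (∑' k : ℤ, ‖c k‖ ^ 2) :=
  stmt3_general d hd P hdeg T hT
end

section
/- Let p be a monic integer polynomial of degree d ≥ 2. There is a constant C > 0, depending only on d, such that for every square-summable sequence (a_k)_{k∈ℤ}, ‖∑_{k∈ℤ} a_k e^{i(kx + p(k)t)}‖_{L⁴(𝕋²)} ≤ C (∑_{k∈ℤ} |a_k|²)^{1/2}. -/
/-!
Write `F = ∑ aₖ e(λₖ)` with `λₖ = (k, P k)`. Expanding `|F|⁴ = |F F̄|²` and integrating term by term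
over the torus, orthogonality of the characters leaves `(2π)²` times the sum of
`a_{k₁} ā_{k₂} ā_{k₃} a_{k₄}` over the quadruples with `λ_{k₁} - λ_{k₂} = λ_{k₃} - λ_{k₄}`.
The quadruples with `k₁ = k₂` (hence `k₃ = k₄`) contribute `(∑ |aₖ|²)²`. A nonzero difference
`(m, n)` is represented at most `d` times, because for `m ≠ 0` and `d ≥ 2` the polynomial
`P(X) - P(X - m) - n` is nonzero; by AM-GM the remaining quadruples then contribute at most
`d (∑ |aₖ|²)²`.
-/

open MeasureTheory Real
open scoped NNReal ENNReal ComplexConjugate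

section Polynomial

open Polynomial

theorem Polynomial.sub_comp_X_sub_C_ne_C {P : ℤ[X]} (hP : 2 ≤ P.natDegree) {m : ℤ} (hm : m ≠ 0)
    (n : ℤ) : P - P.comp (X - C m) ≠ C n := by
  intro h
  have hstep : ∀ x, P.eval x = P.eval (x - m) + n := fun x => by
    simpa [eval_comp, sub_eq_iff_eq_add'] using congrArg (eval x) h
  have hlin : ∀ j : ℤ, P.eval (m * j) = P.eval 0 + n * j := by
    intro j
    induction j using Int.induction_on with
    | zero => simp
    | succ j ih => rw [hstep, show m * (j + 1) - m = m * j by ring, ih]; ring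
    | pred j ih =>
      have := hstep (m * -j)
      rw [show m * -(j : ℤ) - m = m * (-j - 1) by ring] at this
      linarith
  have hcomp : P.comp (C m * X) = C n * X + C (P.eval 0) :=
    Polynomial.funext fun j => by
      simp only [eq_intCast, eval_comp, eval_mul, eval_intCast, Int.cast_eq, eval_X, hlin, eval_add]
      ring
  have := congrArg natDegree hcomp
  rw [natDegree_comp, natDegree_C_mul_X m hm, mul_one] at this
  have : (C n * X + C (P.eval 0)).natDegree ≤ 1 := natDegree_linear_le
  omega

theorem Polynomial.encard_graph_sub_eq_le {P : ℤ[X]} (hP : 2 ≤ P.natDegree) {b : ℤ × ℤ}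
    (hb : b ≠ 0) :
    {p : ℤ × ℤ | (p.1, P.eval p.1) - (p.2, P.eval p.2) = b}.encard ≤ P.natDegree := by
  obtain ⟨m, n⟩ := b
  set R := P - P.comp (X - C m) - C n
  have hR : R ≠ 0 := by
    by_cases hm : m = 0
    · obtain rfl := hm
      have hn : n ≠ 0 := by rintro rfl; exact hb rfl
      simpa [R] using hn
    · exact sub_ne_zero.mpr (sub_comp_X_sub_C_ne_C hP hm n)
  have hsub : {p : ℤ × ℤ | (p.1, P.eval p.1) - (p.2, P.eval p.2) = (m, n)} ⊆
      (fun r => (r, r - m)) '' (R.roots.toFinset : Set ℤ) := by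
    rintro ⟨k, l⟩ hkl
    simp only [Set.mem_ofPred_eq, Prod.mk_sub_mk, Prod.mk.injEq] at hkl
    obtain ⟨h1, h2⟩ := hkl
    obtain rfl : l = k - m := by omega
    refine ⟨k, ?_, rfl⟩
    simp only [Finset.mem_coe, Multiset.mem_toFinset, mem_roots hR, IsRoot.def, R, eval_sub,
      eval_comp, eval_X, eval_C]
    linarith
  have hdeg : R.natDegree ≤ P.natDegree := by
    refine (natDegree_sub_le _ _).trans (max_le ?_ (by simp))
    refine (natDegree_sub_le _ _).trans (max_le le_rfl ?_)
    rw [natDegree_comp, natDegree_X_sub_C, mul_one]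
  calc _ ≤ ((fun r => (r, r - m)) '' (R.roots.toFinset : Set ℤ)).encard :=
        Set.encard_le_encard hsub
    _ ≤ (R.roots.toFinset : Set ℤ).encard := Set.encard_image_le _ _
    _ = R.roots.toFinset.card := Set.encard_coe_eq_coe_finsetCard _
    _ ≤ P.natDegree := by
      exact_mod_cast (Multiset.toFinset_card_le _).trans ((card_roots' R).trans hdeg)

end Polynomial

theorem ENNReal.tsum_ite_eq_mul_le_of_encard_fiber_le {κ β : Type*} [DecidableEq β] (f : κ → β)
    (w : κ → ℝ≥0) (N : ℝ≥0∞) (hN : ∀ p, w p ≠ 0 → (f ⁻¹' {f p}).encard ≤ N) :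
    ∑' pq : κ × κ, (if f pq.1 = f pq.2 then (w pq.1 * w pq.2 : ℝ≥0∞) else 0) ≤
      N * ∑' p, (w p : ℝ≥0∞) ^ 2 := by
  set S := ∑' pq : κ × κ, (if f pq.1 = f pq.2 then (w pq.1 : ℝ≥0∞) ^ 2 else 0) with hS
  have hamgm : ∀ pq : κ × κ, 2 * (if f pq.1 = f pq.2 then (w pq.1 * w pq.2 : ℝ≥0∞) else 0) ≤
      (if f pq.1 = f pq.2 then (w pq.1 : ℝ≥0∞) ^ 2 else 0) +
        (if f pq.2 = f pq.1 then (w pq.2 : ℝ≥0∞) ^ 2 else 0) := fun pq => by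
    split_ifs with h h' h'
    · have := two_mul_le_add_sq (w pq.1) (w pq.2)
      rw [mul_assoc] at this
      exact_mod_cast this
    all_goals simp_all [eq_comm]
  have hswap : ∑' pq : κ × κ, (if f pq.2 = f pq.1 then (w pq.2 : ℝ≥0∞) ^ 2 else 0) = S :=
    (Equiv.prodComm κ κ).tsum_eq (fun pq => if f pq.1 = f pq.2 then (w pq.1 : ℝ≥0∞) ^ 2 else 0)
  have hfiber : S ≤ N * ∑' p, (w p : ℝ≥0∞) ^ 2 := by
    rw [hS, ENNReal.tsum_prod', ← ENNReal.tsum_mul_left]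
    refine ENNReal.tsum_le_tsum fun p => ?_
    by_cases hp : w p = 0
    · simp [hp]
    have : ∑' q, (if f p = f q then (w p : ℝ≥0∞) ^ 2 else 0) =
        (f ⁻¹' {f p}).encard * (w p : ℝ≥0∞) ^ 2 := by
      rw [← ENNReal.tsum_set_const, tsum_subtype (f ⁻¹' {f p}) fun _ => (w p : ℝ≥0∞) ^ 2]
      refine tsum_congr fun q => ?_
      by_cases h : f q = f p
      · rw [if_pos h.symm, Set.indicator_of_mem (s := f ⁻¹' {f p}) h]
      · rw [if_neg (Ne.symm h), Set.indicator_of_notMem (s := f ⁻¹' {f p}) h]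
    rw [this]
    gcongr
    exact hN p hp
  have h2 : (2 : ℝ≥0∞) * ∑' pq : κ × κ, (if f pq.1 = f pq.2 then (w pq.1 * w pq.2 : ℝ≥0∞) else 0)
      ≤ 2 * (N * ∑' p, (w p : ℝ≥0∞) ^ 2) :=
    calc _ = ∑' pq : κ × κ, 2 * (if f pq.1 = f pq.2 then (w pq.1 * w pq.2 : ℝ≥0∞) else 0) :=
          ENNReal.tsum_mul_left.symm
      _ ≤ _ := ENNReal.tsum_le_tsum hamgm
      _ = S + S := by rw [ENNReal.tsum_add, hswap]
      _ ≤ 2 * (N * ∑' p, (w p : ℝ≥0∞) ^ 2) := by rw [two_mul]; gcongr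
  exact (ENNReal.mul_le_mul_iff_right two_ne_zero ENNReal.ofNat_ne_top).mp h2

theorem ENNReal.tsum_prod_mul_eq_sq {κ : Type*} (F : κ → ℝ≥0∞) :
    ∑' p : κ × κ, F p.1 * F p.2 = (∑' i, F i) ^ 2 := by
  rw [ENNReal.tsum_prod', sq]
  simp_rw [ENNReal.tsum_mul_left, ENNReal.tsum_mul_right]

theorem ENNReal.tsum_ite_eq_mul_eq_sq_add {κ β : Type*} [DecidableEq β] (f : κ → β) (b : β)
    (u : κ → ℝ≥0) :
    ∑' pq : κ × κ, (if f pq.1 = f pq.2 then (u pq.1 * u pq.2 : ℝ≥0∞) else 0) =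
      (∑' p, if f p = b then (u p : ℝ≥0∞) else 0) ^ 2 +
        ∑' pq : κ × κ, if f pq.1 = f pq.2 then
          ((if f pq.1 = b then 0 else u pq.1 : ℝ≥0) * (if f pq.2 = b then 0 else u pq.2 : ℝ≥0) :
            ℝ≥0∞) else 0 := by
  rw [← tsum_prod_mul_eq_sq, ← ENNReal.tsum_add]
  refine tsum_congr fun ⟨p, q⟩ => ?_
  by_cases hp : f p = b <;> by_cases hq : f q = b <;> by_cases hpq : f p = f q <;> simp_all

theorem ENNReal.tsum_ite_sub_eq_sub_mul_le {ι G : Type*} [AddCommGroup G] [DecidableEq G]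
    {l : ι → G} (hl : Function.Injective l) (N : ℝ≥0∞)
    (hN : ∀ b ≠ 0, {p : ι × ι | l p.1 - l p.2 = b}.encard ≤ N) (w : ι → ℝ≥0) :
    ∑' pq : (ι × ι) × (ι × ι), (if l pq.1.1 - l pq.1.2 = l pq.2.1 - l pq.2.2 then
        (w pq.1.1 * w pq.1.2 * (w pq.2.1 * w pq.2.2) : ℝ≥0∞) else 0) ≤
      (1 + N) * (∑' i, (w i : ℝ≥0∞) ^ 2) ^ 2 := by
  classical
  set f : ι × ι → G := fun p => l p.1 - l p.2
  set u : ι × ι → ℝ≥0 := fun p => w p.1 * w p.2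
  set v : ι × ι → ℝ≥0 := fun p => if f p = 0 then 0 else u p
  have hf : ∀ p, f p = 0 ↔ p.1 = p.2 := fun p => sub_eq_zero.trans hl.eq_iff
  have hdiag : ∑' p, (if f p = 0 then (u p : ℝ≥0∞) else 0) = ∑' i, (w i : ℝ≥0∞) ^ 2 := by
    simp_rw [hf, ENNReal.tsum_prod']
    simp [u, sq]
  have hv : ∑' p, (v p : ℝ≥0∞) ^ 2 ≤ (∑' i, (w i : ℝ≥0∞) ^ 2) ^ 2 := by
    rw [← tsum_prod_mul_eq_sq]
    refine ENNReal.tsum_le_tsum fun p => ?_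
    by_cases hp : f p = 0 <;> simp [v, u, hp, mul_pow]
  have hvN : ∀ p, v p ≠ 0 → (f ⁻¹' {f p}).encard ≤ N := fun p hp =>
    hN (f p) fun h => hp (by simp [v, h])
  calc _ = ∑' pq : (ι × ι) × (ι × ι),
          (if f pq.1 = f pq.2 then (u pq.1 * u pq.2 : ℝ≥0∞) else 0) := by
        simp only [f, u, ENNReal.coe_mul]
    _ = (∑' i, (w i : ℝ≥0∞) ^ 2) ^ 2 +
          ∑' pq : (ι × ι) × (ι × ι), (if f pq.1 = f pq.2 then (v pq.1 * v pq.2 : ℝ≥0∞) else 0) := by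
        rw [tsum_ite_eq_mul_eq_sq_add f 0 u, hdiag]
    _ ≤ (∑' i, (w i : ℝ≥0∞) ^ 2) ^ 2 + N * (∑' i, (w i : ℝ≥0∞) ^ 2) ^ 2 := by
        gcongr
        exact (tsum_ite_eq_mul_le_of_encard_fiber_le f v N hvN).trans (by gcongr)
    _ = (1 + N) * (∑' i, (w i : ℝ≥0∞) ^ 2) ^ 2 := by ring

section Torus

open Complex

noncomputable def torusChar (l : ℤ × ℤ) (x t : ℝ) : ℂ :=
  exp (I * ((l.1 : ℂ) * x + (l.2 : ℂ) * t))

theorem torusChar_eq_mul (l : ℤ × ℤ) (x t : ℝ) :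
    torusChar l x t = exp (I * l.1 * x) * exp (I * l.2 * t) := by
  rw [torusChar, ← Complex.exp_add]; ring_nf

theorem norm_exp_I_mul_int_mul (m : ℤ) (x : ℝ) : ‖exp (I * m * x)‖ = 1 := by
  simp [Complex.norm_exp]

theorem norm_torusChar (l : ℤ × ℤ) (x t : ℝ) : ‖torusChar l x t‖ = 1 := by
  simp [torusChar_eq_mul, norm_exp_I_mul_int_mul]

theorem torusChar_mul_conj (l l' : ℤ × ℤ) (x t : ℝ) :
    torusChar l x t * conj (torusChar l' x t) = torusChar (l - l') x t := by
  rw [torusChar, torusChar, torusChar, ← Complex.exp_conj, ← Complex.exp_add]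
  simp only [map_mul, map_add, conj_I, map_intCast, conj_ofReal, Prod.fst_sub, Prod.snd_sub]
  push_cast
  ring_nf

theorem integral_exp_I_mul_int_mul (m : ℤ) :
    ∫ x in Set.Ioc 0 (2 * π), exp (I * m * x) = if m = 0 then (2 * π : ℂ) else 0 := by
  rw [← intervalIntegral.integral_of_le (by positivity)]
  split_ifs with hm
  · simp [hm]
  have hc : I * m ≠ 0 := by simp [hm]
  rw [integral_exp_mul_complex hc, show I * m * (2 * π : ℝ) = m * (2 * π * I) by push_cast; ring,
    exp_int_mul_two_pi_mul_I]
  simp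

theorem integral_tsum_mul_exp_I_mul_int_mul {ι : Type*} [Countable ι] {c : ι → ℂ}
    (hc : Summable (‖c ·‖)) (m : ι → ℤ) :
    ∫ x in Set.Ioc 0 (2 * π), ∑' i, c i * exp (I * m i * x) =
      2 * π * ∑' i, if m i = 0 then c i else 0 := by
  have hcont : ∀ i, Continuous fun x : ℝ => c i * exp (I * m i * x) := fun i => by fun_prop
  rw [← integral_tsum_of_summable_integral_norm (fun i => (hcont i).integrableOn_Ioc)]
  · rw [← tsum_mul_left]
    refine tsum_congr fun i => ?_
    rw [integral_const_mul, integral_exp_I_mul_int_mul]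
    split_ifs <;> ring
  · simpa [norm_exp_I_mul_int_mul, two_pi_pos.le] using hc.mul_left (2 * π)

theorem integral_integral_tsum_mul_torusChar {ι : Type*} [Countable ι] {c : ι → ℂ}
    (hc : Summable (‖c ·‖)) (l : ι → ℤ × ℤ) :
    ∫ x in Set.Ioc 0 (2 * π), ∫ t in Set.Ioc 0 (2 * π), ∑' i, c i * torusChar (l i) x t =
      (2 * π) ^ 2 * ∑' i, if l i = 0 then c i else 0 := by
  have hinner : ∀ x : ℝ, ∫ t in Set.Ioc 0 (2 * π), ∑' i, c i * torusChar (l i) x t =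
      2 * π * ∑' i, (if (l i).2 = 0 then c i else 0) * exp (I * (l i).1 * x) := fun x => by
    simp_rw [torusChar_eq_mul, ← mul_assoc]
    rw [integral_tsum_mul_exp_I_mul_int_mul _ fun i => (l i).2]
    · congr 1
      refine tsum_congr fun i => ?_
      split_ifs <;> simp
    · simpa [norm_exp_I_mul_int_mul] using hc
  have hc' : Summable fun i => ‖if (l i).2 = 0 then c i else 0‖ :=
    hc.of_nonneg_of_le (fun _ => norm_nonneg _) fun i => by split_ifs <;> simp
  simp_rw [hinner]
  rw [integral_const_mul, integral_tsum_mul_exp_I_mul_int_mul hc' fun i => (l i).1]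
  rw [← mul_assoc, ← sq]
  congr 1
  refine tsum_congr fun i => ?_
  simp only [Prod.ext_iff, Prod.fst_zero, Prod.snd_zero]
  split_ifs <;> tauto

theorem ofReal_sq_norm_tsum_mul_torusChar {ι : Type*} {c : ι → ℂ} (hc : Summable (‖c ·‖))
    (l : ι → ℤ × ℤ) (x t : ℝ) :
    ((‖∑' i, c i * torusChar (l i) x t‖ ^ 2 : ℝ) : ℂ) =
      ∑' ij : ι × ι, c ij.1 * conj (c ij.2) * torusChar (l ij.1 - l ij.2) x t := by
  have hsum : Summable fun i => ‖c i * torusChar (l i) x t‖ := by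
    simpa [norm_torusChar] using hc
  rw [Complex.ofReal_pow, ← Complex.mul_conj', Complex.conj_tsum,
    tsum_mul_tsum_of_summable_norm hsum (by simpa using hsum)]
  refine tsum_congr fun ij => ?_
  rw [map_mul, ← torusChar_mul_conj]
  ring

theorem integral_integral_norm_tsum_mul_torusChar_pow_four {ι : Type*} [Countable ι]
    {c : ι → ℂ} (hc : Summable (‖c ·‖)) (l : ι → ℤ × ℤ) :
    ((∫ x in Set.Ioc 0 (2 * π), ∫ t in Set.Ioc 0 (2 * π),
        ‖∑' i, c i * torusChar (l i) x t‖ ^ 4 : ℝ) : ℂ) =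
      (2 * π) ^ 2 * ∑' pq : (ι × ι) × (ι × ι),
        if l pq.1.1 - l pq.1.2 = l pq.2.1 - l pq.2.2 then
          c pq.1.1 * conj (c pq.1.2) * conj (c pq.2.1 * conj (c pq.2.2)) else 0 := by
  have hb : Summable fun ij : ι × ι => ‖c ij.1 * conj (c ij.2)‖ :=
    hc.mul_norm (g := fun j => conj (c j)) (by simpa using hc)
  have hpow : ∀ x t, ‖∑' i, c i * torusChar (l i) x t‖ ^ 4 =
      ‖∑' ij : ι × ι, c ij.1 * conj (c ij.2) * torusChar (l ij.1 - l ij.2) x t‖ ^ 2 := fun x t => by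
    rw [← ofReal_sq_norm_tsum_mul_torusChar hc, Complex.norm_real, Real.norm_eq_abs,
      abs_of_nonneg (by positivity), ← pow_mul]
  simp_rw [hpow, ← integral_complex_ofReal, ofReal_sq_norm_tsum_mul_torusChar hb]
  rw [integral_integral_tsum_mul_torusChar
    (hb.mul_norm (g := fun ij : ι × ι => conj (c ij.1 * conj (c ij.2))) (by simpa using hb))]
  congr 1
  refine tsum_congr fun pq => ?_
  simp only [sub_eq_zero]

theorem integral_integral_norm_tsum_mul_torusChar_pow_four_le {ι : Type*} [Countable ι]
    {c : ι → ℂ} (hc : Summable (‖c ·‖)) {l : ι → ℤ × ℤ} (hl : Function.Injective l) {N : ℕ}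
    (hN : ∀ b ≠ 0, {p : ι × ι | l p.1 - l p.2 = b}.encard ≤ N) :
    ∫ x in Set.Ioc 0 (2 * π), ∫ t in Set.Ioc 0 (2 * π), ‖∑' i, c i * torusChar (l i) x t‖ ^ 4 ≤
      (2 * π) ^ 2 * ((1 + N) * (∑' i, ‖c i‖ ^ 2) ^ 2) := by
  set S := ∑' pq : (ι × ι) × (ι × ι), if l pq.1.1 - l pq.1.2 = l pq.2.1 - l pq.2.2 then
    c pq.1.1 * conj (c pq.1.2) * conj (c pq.2.1 * conj (c pq.2.2)) else 0
  have hSₑ : ‖S‖ₑ ≤ (1 + N) * (∑' i, ‖c i‖ₑ ^ 2) ^ 2 := by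
    refine enorm_tsum_le_tsum_enorm.trans (le_of_eq_of_le (tsum_congr fun pq => ?_)
      (ENNReal.tsum_ite_sub_eq_sub_mul_le hl N (fun b hb => by exact_mod_cast hN b hb) (‖c ·‖₊)))
    split_ifs <;> simp [enorm_eq_nnnorm]
  have hsq : Summable fun i => ‖c i‖ ^ 2 := by
    refine (hc.mul_left (∑' i, ‖c i‖)).of_nonneg_of_le (fun _ => by positivity) fun i => ?_
    rw [sq]
    gcongr
    exact hc.le_tsum i fun j _ => norm_nonneg _
  have hX : ∑' i, ‖c i‖ₑ ^ 2 = ENNReal.ofReal (∑' i, ‖c i‖ ^ 2) := by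
    rw [ENNReal.ofReal_tsum_of_nonneg (fun _ => by positivity) hsq]
    simp [ENNReal.ofReal_pow]
  have hS : ‖S‖ ≤ (1 + N) * (∑' i, ‖c i‖ ^ 2) ^ 2 := by
    have := ENNReal.toReal_mono (by rw [hX]; finiteness) hSₑ
    rwa [toReal_enorm, hX, ENNReal.toReal_mul, ENNReal.toReal_pow,
      ENNReal.toReal_ofReal (tsum_nonneg fun _ => by positivity)] at this
  calc _ = ‖((∫ x in Set.Ioc 0 (2 * π), ∫ t in Set.Ioc 0 (2 * π),
        ‖∑' i, c i * torusChar (l i) x t‖ ^ 4 : ℝ) : ℂ)‖ := by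
        rw [Complex.norm_real, Real.norm_of_nonneg]
        exact integral_nonneg fun x => integral_nonneg fun t => by positivity
    _ = (2 * π) ^ 2 * ‖S‖ := by
        rw [integral_integral_norm_tsum_mul_torusChar_pow_four hc, norm_mul, norm_pow,
          Complex.norm_mul, Complex.norm_ofNat, Complex.norm_real, Real.norm_of_nonneg pi_pos.le]
    _ ≤ _ := by gcongr

end Torus

theorem stmt4_general (d : ℕ) (hd : 2 ≤ d) (P : Polynomial ℤ)
    (hdeg : P.natDegree = d) :
    ∃ C : ℝ, 0 < C ∧ ∀ a : ℤ → ℂ, Summable (fun k => ‖a k‖ ^ 2) →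
      (∫ x in Set.Ioc (0:ℝ) (2*π), ∫ t in Set.Ioc (0:ℝ) (2*π),
          ‖∑' k : ℤ, a k *
            Complex.exp (Complex.I * ((k : ℂ) * (x : ℂ) + ((P.eval k : ℤ) : ℂ) * (t : ℂ)))‖ ^ 4)
          ^ ((1:ℝ)/4)
        ≤ C * (∑' k : ℤ, ‖a k‖ ^ 2) ^ ((1:ℝ)/2) := by
  refine ⟨((2 * π) ^ 2 * (1 + d)) ^ ((1 : ℝ) / 4), by positivity, fun a ha2 => ?_⟩
  change (∫ x in Set.Ioc (0:ℝ) (2*π), ∫ t in Set.Ioc (0:ℝ) (2*π),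
    ‖∑' k : ℤ, a k * torusChar (k, P.eval k) x t‖ ^ 4) ^ ((1:ℝ)/4) ≤ _
  have hA : 0 ≤ ∑' k, ‖a k‖ ^ 2 := tsum_nonneg fun _ => by positivity
  have hsqrt : ((∑' k, ‖a k‖ ^ 2) ^ 2) ^ ((1 : ℝ) / 4) = (∑' k, ‖a k‖ ^ 2) ^ ((1 : ℝ) / 2) := by
    rw [← Real.rpow_natCast, ← Real.rpow_mul hA]
    norm_num
  rw [← hsqrt, ← Real.mul_rpow (by positivity) (by positivity), mul_assoc]
  by_cases ha1 : Summable (‖a ·‖)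
  · have hN : ∀ b ≠ 0, {p : ℤ × ℤ | (p.1, P.eval p.1) - (p.2, P.eval p.2) = b}.encard ≤ d :=
      fun b hb => hdeg ▸ P.encard_graph_sub_eq_le (hdeg ▸ hd) hb
    exact Real.rpow_le_rpow (integral_nonneg fun x => integral_nonneg fun t => by positivity)
      (integral_integral_norm_tsum_mul_torusChar_pow_four_le ha1
        (fun _ _ h => congrArg Prod.fst h) hN) (by norm_num)
  · -- In `ℂ` summability is absolute summability, so the series has the junk value `0`.
    have hzero : ∀ x t : ℝ, ∑' k : ℤ, a k * torusChar (k, P.eval k) x t = 0 := fun x t =>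
      tsum_eq_zero_of_not_summable fun hs => ha1 (by simpa [norm_torusChar] using hs.norm)
    simp only [hzero, norm_zero, zero_pow four_ne_zero, integral_zero]
    rw [Real.zero_rpow (by norm_num)]
    positivity

/-- `L⁴(𝕋²)` Strichartz (Zygmund-type) estimate: for a monic integer polynomial `P` of
degree `d ≥ 2`, `‖∑_k a_k e^{i(kx + P(k)t)}‖_{L⁴(𝕋²)} ≤ C (∑_k |a_k|²)^{1/2}`. -/
theorem stmt4 (d : ℕ) (hd : 2 ≤ d) (P : Polynomial ℤ) (hP : P.Monic)
    (hdeg : P.natDegree = d) :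
    ∃ C : ℝ, 0 < C ∧ ∀ a : ℤ → ℂ, Summable (fun k => ‖a k‖ ^ 2) →
      (∫ x in Set.Ioc (0:ℝ) (2*π), ∫ t in Set.Ioc (0:ℝ) (2*π),
          ‖∑' k : ℤ, a k *
            Complex.exp (Complex.I * ((k : ℂ) * (x : ℂ) + ((P.eval k : ℤ) : ℂ) * (t : ℂ)))‖ ^ 4)
          ^ ((1:ℝ)/4)
        ≤ C * (∑' k : ℤ, ‖a k‖ ^ 2) ^ ((1:ℝ)/2) :=
  stmt4_general d hd P hdeg
end

section
/- Let p be a monic integer polynomial of degree d ≥ 2 and P(D) the Fourier multiplier with symbol p(k) on L²(𝕋). There exists a constant C > 0 such that for all z ∈ ℂ with |Im z| ≥ 1 and all f ∈ L¹(𝕋), ‖(P(D) − z)^{−1} f‖_{L^∞(𝕋)} ≤ C ‖f‖_{L¹(𝕋)}. -/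
/-!
Each term of the series is bounded using `|c_k| ≤ ‖f‖₁ / 2π` and
`|(p(k) - z)⁻¹| ≤ 1 / max 1 |p(k) - Re z|`, so it suffices to bound
`∑_k 1 / max 1 |p(k) - a|` uniformly in `a ∈ ℝ`. Since `p'` grows at least linearly, on each tail
`|k| ≥ R` the values are quadratically separated: `|p(i) - p(j)| ≥ c (i - j)²`. If `k₀` nearly
minimises `|p(k) - a|` on a tail, then `|p(k) - a| ≳ (k - k₀)²` there, so the tail sum is dominated
by a translate of `∑_n 1 / max 1 (c n²)`, which does not depend on `a`.
-/

open MeasureTheory Real Polynomial Filter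

noncomputable def sqMajorant (c : ℝ) (n : ℤ) : ℝ := (max 1 (c * (n : ℝ) ^ 2))⁻¹

lemma sqMajorant_nonneg (c : ℝ) (n : ℤ) : 0 ≤ sqMajorant c n := by
  unfold sqMajorant; positivity

lemma summable_sqMajorant {c : ℝ} (hc : 0 < c) : Summable (sqMajorant c) := by
  refine Summable.of_norm_bounded_eventually
    ((Real.summable_one_div_int_pow.mpr one_lt_two).mul_left c⁻¹) ?_
  filter_upwards [(Set.finite_singleton (0 : ℤ)).compl_mem_cofinite] with n hn
  have hn2 : (0 : ℝ) < (n : ℝ) ^ 2 := by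
    have : (n : ℝ) ≠ 0 := by exact_mod_cast hn
    positivity
  rw [Real.norm_of_nonneg (sqMajorant_nonneg c n), sqMajorant, ← div_eq_mul_one_div, div_eq_mul_inv,
    ← mul_inv]
  exact inv_anti₀ (by positivity) (le_max_right _ _)

lemma tsum_sqMajorant_pos {c : ℝ} (hc : 0 < c) : 0 < ∑' n, sqMajorant c n :=
  (summable_sqMajorant hc).tsum_pos (sqMajorant_nonneg c) 0 (by simp [sqMajorant])

lemma exists_inv_max_one_abs_sub_le_sqMajorant {S : Set ℤ} {v : ℤ → ℝ} {c : ℝ}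
    (hv : ∀ i ∈ S, ∀ j ∈ S, c * ((i : ℝ) - j) ^ 2 ≤ |v i - v j|) (a : ℝ) :
    ∃ k₀ : ℤ, ∀ k ∈ S, (max 1 |v k - a|)⁻¹ ≤ sqMajorant (c / 3) (k - k₀) := by
  rcases S.eq_empty_or_nonempty with rfl | hS
  · exact ⟨0, by simp⟩
  -- `k₀` minimises `|v k - a|` over `S` up to an error `< 1`.
  set k₀ := Function.argminOn (fun k => ⌊|v k - a|⌋₊) S hS
  refine ⟨k₀, fun k hk => ?_⟩
  have hmin : |v k₀ - a| ≤ |v k - a| + 1 := by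
    have h := Function.argminOn_le (fun k => ⌊|v k - a|⌋₊) S hk
    have h' : (⌊|v k₀ - a|⌋₊ : ℝ) ≤ ⌊|v k - a|⌋₊ := by exact_mod_cast h
    linarith [Nat.lt_floor_add_one |v k₀ - a|, Nat.floor_le (abs_nonneg (v k - a))]
  have hsep : c * ((k : ℝ) - k₀) ^ 2 ≤ 2 * |v k - a| + 1 := by
    have := hv k hk k₀ (Function.argminOn_mem _ S hS)
    linarith [abs_sub_le (v k) a (v k₀), abs_sub_comm a (v k₀)]
  refine inv_anti₀ (by positivity) (max_le (le_max_left _ _) ?_)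
  push_cast
  linarith [le_max_left 1 |v k - a|, le_max_right 1 |v k - a|]

namespace Polynomial

lemma eventually_leadingCoeff_div_two_mul_le_eval {q : ℝ[X]} (hq : 1 ≤ q.natDegree)
    (hlc : 0 < q.leadingCoeff) : ∀ᶠ x in atTop, q.leadingCoeff / 2 * x ≤ q.eval x := by
  filter_upwards [(isEquivalent_atTop_lead q).def (show (0:ℝ) < 1 / 2 by norm_num),
    eventually_ge_atTop 1] with x hx hx1
  have hlead : q.leadingCoeff * x ≤ q.leadingCoeff * x ^ q.natDegree :=
    mul_le_mul_of_nonneg_left (le_self_pow₀ hx1 (by omega)) hlc.le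
  rw [Pi.sub_apply, Real.norm_eq_abs, Real.norm_of_nonneg (by positivity)] at hx
  linarith [neg_abs_le (q.eval x - q.leadingCoeff * x ^ q.natDegree)]

lemma exists_mul_sq_le_abs_eval_sub {p : ℝ[X]} (hp : 2 ≤ p.natDegree) :
    ∃ c > 0, ∃ R, ∀ x y, R ≤ x → R ≤ y → c * (x - y) ^ 2 ≤ |p.eval x - p.eval y| := by
  wlog hlc : 0 < p.leadingCoeff generalizing p
  · obtain ⟨c, hc, R, h⟩ := this (p := -p) (by rwa [natDegree_neg]) (by
      rw [leadingCoeff_neg, neg_pos]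
      exact lt_of_le_of_ne (not_lt.mp hlc) (leadingCoeff_ne_zero.mpr (by rintro rfl; simp at hp)))
    refine ⟨c, hc, R, fun x y hx hy => ?_⟩
    simpa [abs_sub_comm, ← sub_eq_neg_add] using h x y hx hy
  have hdeg : (2 : ℝ) ≤ p.natDegree := by exact_mod_cast hp
  obtain ⟨R, hR⟩ := eventually_atTop.mp <| eventually_leadingCoeff_div_two_mul_le_eval
    (q := p.derivative) (by rw [natDegree_derivative]; omega)
    (by rw [leadingCoeff_derivative]; positivity)
  rw [leadingCoeff_derivative] at hR
  set c := p.leadingCoeff * p.natDegree / 4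
  have hc : 0 < c := by positivity
  -- `p - c X²` is nondecreasing on `[max R 0, ∞)` since there `p' ≥ 2 c x`.
  set g : ℝ[X] := p - C c * X ^ 2
  have hg : MonotoneOn (fun x => g.eval x) (Set.Ici (max R 0)) := by
    refine monotoneOn_of_deriv_nonneg (convex_Ici _) g.continuousOn g.differentiableOn fun x hx => ?_
    rw [interior_Ici, Set.mem_Ioi, max_lt_iff] at hx
    have := hR x hx.1.le
    rw [Polynomial.deriv]
    simp only [g, derivative_sub, derivative_C_mul_X_pow, eval_sub, eval_C_mul, eval_pow, eval_X]
    norm_num [c]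
    linarith
  refine ⟨c, hc, max R 0, ?_⟩
  suffices h : ∀ x y, max R 0 ≤ x → x ≤ y → c * (x - y) ^ 2 ≤ p.eval y - p.eval x by
    intro x y hx hy
    rcases le_total x y with hxy | hxy
    · rw [abs_sub_comm]; exact (h x y hx hxy).trans (le_abs_self _)
    · rw [← neg_sub y x, even_two.neg_pow]; exact (h y x hy hxy).trans (le_abs_self _)
  intro x y hx hxy
  have hx0 : 0 ≤ x := le_of_max_le_right hx
  have := hg hx (hx.trans hxy) hxy
  simp only [g, eval_sub, eval_C_mul, eval_pow, eval_X] at this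
  nlinarith [mul_nonneg (mul_nonneg hc.le hx0) (sub_nonneg.2 hxy)]

-- On `k ≥ R₁` and on `k ≤ -R₂` (via `p.comp (-X)`) the values `p k` are quadratically separated;
-- each of the finitely many remaining `k` contributes at most `1`.
lemma exists_inv_max_one_abs_eval_sub_le_majorant {p : ℝ[X]} (hp : 2 ≤ p.natDegree) :
    ∃ c₁ > 0, ∃ c₂ > 0, ∃ M : Finset ℤ, ∀ a : ℝ, ∃ k₁ k₂ : ℤ, ∀ k : ℤ,
      (max 1 |p.eval (k : ℝ) - a|)⁻¹ ≤
        (M : Set ℤ).indicator 1 k + sqMajorant c₁ (k - k₁) + sqMajorant c₂ (k - k₂) := by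
  obtain ⟨c₁, hc₁, R₁, h₁⟩ := exists_mul_sq_le_abs_eval_sub hp
  obtain ⟨c₂, hc₂, R₂, h₂⟩ := exists_mul_sq_le_abs_eval_sub (p := p.comp (-X))
    (by rwa [natDegree_comp, natDegree_neg, natDegree_X, mul_one])
  refine ⟨c₁ / 3, by positivity, c₂ / 3, by positivity, Finset.Icc ⌊-R₂⌋ ⌈R₁⌉, fun a => ?_⟩
  obtain ⟨k₁, hk₁⟩ := exists_inv_max_one_abs_sub_le_sqMajorant (S := {k | R₁ ≤ k})
    (v := fun k => p.eval (k : ℝ)) (fun i hi j hj => h₁ i j hi hj) a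
  obtain ⟨k₂, hk₂⟩ := exists_inv_max_one_abs_sub_le_sqMajorant (S := {k | R₂ ≤ -k})
    (v := fun k => p.eval (k : ℝ)) (fun i hi j hj => by
      simpa [neg_add_eq_sub, sub_sq_comm] using h₂ (-i) (-j) hi hj) a
  refine ⟨k₁, k₂, fun k => ?_⟩
  have h₀ : 0 ≤ (Finset.Icc ⌊-R₂⌋ ⌈R₁⌉ : Set ℤ).indicator (1 : ℤ → ℝ) k :=
    Set.indicator_nonneg (fun _ _ => zero_le_one) k
  have h₁ := sqMajorant_nonneg (c₁ / 3) (k - k₁)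
  have h₂ := sqMajorant_nonneg (c₂ / 3) (k - k₂)
  by_cases hk₁' : R₁ ≤ k
  · linarith [hk₁ k hk₁']
  by_cases hk₂' : R₂ ≤ -k
  · linarith [hk₂ k hk₂']
  have hM : k ∈ Finset.Icc ⌊-R₂⌋ ⌈R₁⌉ := Finset.mem_Icc.mpr
    ⟨Int.cast_le.mp ((Int.floor_le _).trans (by linarith)),
      Int.cast_le.mp ((not_le.mp hk₁').le.trans (Int.le_ceil _))⟩
  rw [Set.indicator_of_mem (by simpa using hM), Pi.one_apply]
  linarith [inv_le_one_of_one_le₀ (le_max_left 1 |p.eval (k : ℝ) - a|)]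

lemma exists_tsum_inv_max_one_abs_eval_sub_le {p : ℝ[X]} (hp : 2 ≤ p.natDegree) :
    ∃ C > 0, ∀ a : ℝ, Summable (fun k : ℤ => (max 1 |p.eval (k : ℝ) - a|)⁻¹) ∧
      ∑' k : ℤ, (max 1 |p.eval (k : ℝ) - a|)⁻¹ ≤ C := by
  obtain ⟨c₁, hc₁, c₂, hc₂, M, hM⟩ := exists_inv_max_one_abs_eval_sub_le_majorant hp
  have hg₀ : Summable ((M : Set ℤ).indicator (1 : ℤ → ℝ)) :=
    summable_of_ne_finset_zero fun k hk => Set.indicator_of_notMem (by simpa using hk) _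
  have hshift : ∀ {c}, 0 < c → ∀ k₀ : ℤ, (Summable fun k => sqMajorant c (k - k₀)) ∧
      ∑' k, sqMajorant c (k - k₀) = ∑' n, sqMajorant c n := fun hc k₀ =>
    ⟨(Equiv.subRight k₀).summable_iff.mpr (summable_sqMajorant hc),
      (Equiv.subRight k₀).tsum_eq (sqMajorant _)⟩
  refine ⟨∑' k, (M : Set ℤ).indicator 1 k + ∑' n, sqMajorant c₁ n + ∑' n, sqMajorant c₂ n,
    add_pos_of_pos_of_nonneg
      (add_pos_of_nonneg_of_pos (tsum_nonneg (Set.indicator_nonneg fun _ _ => zero_le_one))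
        (tsum_sqMajorant_pos hc₁))
      (tsum_nonneg (sqMajorant_nonneg _)), fun a => ?_⟩
  obtain ⟨k₁, k₂, hle⟩ := hM a
  obtain ⟨hs₁, ht₁⟩ := hshift hc₁ k₁
  obtain ⟨hs₂, ht₂⟩ := hshift hc₂ k₂
  have hg := (hg₀.add hs₁).add hs₂
  have hu := Summable.of_nonneg_of_le (fun k => by positivity) hle hg
  refine ⟨hu, (hu.tsum_le_tsum hle hg).trans_eq ?_⟩
  rw [(hg₀.add hs₁).tsum_add hs₂, hg₀.tsum_add hs₁, ht₁, ht₂]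

end Polynomial

lemma norm_inv_ofReal_sub_le {z : ℂ} (hz : 1 ≤ |z.im|) (t : ℝ) :
    ‖((t : ℂ) - z)⁻¹‖ ≤ (max 1 |t - z.re|)⁻¹ := by
  rw [norm_inv]
  refine inv_anti₀ (by positivity) (max_le ?_ ?_)
  · exact hz.trans (by simpa using Complex.abs_im_le_norm ((t : ℂ) - z))
  · simpa using Complex.abs_re_le_norm ((t : ℂ) - z)

lemma norm_integral_mul_exp_le {μ : Measure ℝ} (f : ℝ → ℂ) (ξ : ℝ) :
    ‖∫ y, f y * Complex.exp (-(Complex.I * ξ * y)) ∂μ‖ ≤ ∫ y, ‖f y‖ ∂μ :=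
  (norm_integral_le_integral_norm _).trans_eq (by simp [Complex.norm_exp])

lemma norm_inv_sub_mul_fourierCoeff_mul_exp_le {z : ℂ} (hz : 1 ≤ |z.im|) (t : ℝ) (f : ℝ → ℂ)
    (k : ℤ) (x : ℝ) :
    ‖((t : ℂ) - z)⁻¹ * ((1 / (2 * (π : ℂ))) *
        ∫ y in Set.Ioc (0:ℝ) (2*π), f y * Complex.exp (-(Complex.I * (k : ℂ) * (y : ℂ)))) *
      Complex.exp (Complex.I * (k : ℂ) * (x : ℂ))‖ ≤
      (max 1 |t - z.re|)⁻¹ * ((∫ y in Set.Ioc (0:ℝ) (2*π), ‖f y‖) / (2 * π)) := by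
  have hcoef := norm_integral_mul_exp_le (μ := volume.restrict (Set.Ioc 0 (2 * π))) f k
  have hexp : ‖Complex.exp (Complex.I * k * x)‖ = 1 := by simp [Complex.norm_exp]
  have hpi : ‖1 / (2 * (π : ℂ))‖ = 1 / (2 * π) := by
    rw [← Complex.ofReal_ofNat, ← Complex.ofReal_mul, ← Complex.ofReal_one, ← Complex.ofReal_div,
      Complex.norm_real, Real.norm_of_nonneg (by positivity)]
  rw [Complex.ofReal_intCast] at hcoef
  rw [norm_mul, norm_mul, norm_mul, hexp, mul_one, hpi, one_div_mul_eq_div]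
  gcongr
  exact norm_inv_ofReal_sub_le hz t

theorem stmt15_general (d : ℕ) (hd : 2 ≤ d) (P : Polynomial ℤ)
    (hdeg : P.natDegree = d) :
    ∃ C : ℝ, 0 < C ∧ ∀ z : ℂ, 1 ≤ |z.im| → ∀ f : ℝ → ℂ,
      IntegrableOn f (Set.Ioc (0:ℝ) (2*π)) → ∀ x : ℝ,
      ‖∑' k : ℤ, (((P.eval k : ℤ) : ℂ) - z)⁻¹ *
          ((1 / (2 * (π : ℂ))) *
            ∫ y in Set.Ioc (0:ℝ) (2*π), f y * Complex.exp (-(Complex.I * (k : ℂ) * (y : ℂ)))) *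
          Complex.exp (Complex.I * (k : ℂ) * (x : ℂ))‖
        ≤ C * ∫ y in Set.Ioc (0:ℝ) (2*π), ‖f y‖ := by
  set p := P.map (Int.castRingHom ℝ)
  obtain ⟨C, hC, hsum⟩ := exists_tsum_inv_max_one_abs_eval_sub_le (p := p)
    (by rw [natDegree_map_eq_of_injective Int.cast_injective]; omega)
  refine ⟨C / (2 * π), by positivity, fun z hz f _ x => ?_⟩
  obtain ⟨hu, huC⟩ := hsum z.re
  have hcast : ∀ k : ℤ, ((P.eval k : ℤ) : ℂ) = ((p.eval (k : ℝ) : ℝ) : ℂ) := fun k => by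
    rw [eval_intCast_map, eq_intCast, Int.cast_id, Complex.ofReal_intCast]
  simp only [hcast]
  set L := ∫ y in Set.Ioc (0:ℝ) (2*π), ‖f y‖
  calc _ ≤ (∑' k : ℤ, (max 1 |p.eval (k : ℝ) - z.re|)⁻¹) * (L / (2 * π)) :=
        tsum_of_norm_bounded (hu.hasSum.mul_right _)
          fun k => norm_inv_sub_mul_fourierCoeff_mul_exp_le hz _ f k x
    _ ≤ C * (L / (2 * π)) := by gcongr
    _ = C / (2 * π) * L := by ring

/-- Uniform `L¹ → L^∞` resolvent estimate: for a monic integer polynomial `P` of degree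
`d ≥ 2`, there is `C > 0` such that for all `z ∈ ℂ` with `|Im z| ≥ 1` and all
`f ∈ L¹(𝕋)` with Fourier coefficients `c_k`,
`‖∑_k (P(k) − z)⁻¹ c_k e^{ikx}‖_{L^∞} ≤ C ‖f‖_{L¹}`. -/
theorem stmt15 (d : ℕ) (hd : 2 ≤ d) (P : Polynomial ℤ) (hP : P.Monic)
    (hdeg : P.natDegree = d) :
    ∃ C : ℝ, 0 < C ∧ ∀ z : ℂ, 1 ≤ |z.im| → ∀ f : ℝ → ℂ,
      IntegrableOn f (Set.Ioc (0:ℝ) (2*π)) → ∀ x : ℝ,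
      ‖∑' k : ℤ, (((P.eval k : ℤ) : ℂ) - z)⁻¹ *
          ((1 / (2 * (π : ℂ))) *
            ∫ y in Set.Ioc (0:ℝ) (2*π), f y * Complex.exp (-(Complex.I * (k : ℂ) * (y : ℂ)))) *
          Complex.exp (Complex.I * (k : ℂ) * (x : ℂ))‖
        ≤ C * ∫ y in Set.Ioc (0:ℝ) (2*π), ‖f y‖ :=
  stmt15_general d hd P hdeg
end
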